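/- arXiv:2204.12419 — 2 statements merged into one kernel-verified Lean document; each statement's English description precedes it below -/
import Mathlib

section
/- Let A and A' be totally unimodular matrices representing the same regular oriented matroid (same signed circuits). Then for every positive integer t, the number of lattice points in t·conv{columns of A} equals the number of lattice points in t·conv{columns of A'}; consequently the two root polytopes have the same Ehrhart polynomial. -/
open Finset Pointwise

def Matrix.ColDep {m n : Type*} (A : Matrix m n ℝ) (S : Finset n) : Prop :=
  ¬ LinearIndependent ℝ (fun i : S => A.transpose i.1)

def Matrix.IsCircuit {m n : Type*} (A : Matrix m n ℝ) (C : Finset n) : Prop :=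
  A.ColDep C ∧ ∀ S ⊂ C, ¬ A.ColDep S

/-- A signed circuit: a circuit `C⁺ ⊔ C⁻` with `∑_{i∈C⁺} a_i - ∑_{i∈C⁻} a_i = 0`. -/
def Matrix.IsSignedCircuit {m n : Type*} [Fintype m] [DecidableEq n]
    (A : Matrix m n ℝ) (Cp Cm : Finset n) : Prop :=
  Disjoint Cp Cm ∧ A.IsCircuit (Cp ∪ Cm) ∧
    (∑ i ∈ Cp, A.transpose i) - (∑ i ∈ Cm, A.transpose i) = 0

/-!
A lattice point of `t • conv(columns of A)` is `A x` for some `x ∈ t • Δ` (`Δ` the standard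
simplex) with `A x` integral, so both counts are cardinalities of images of subsets of `t • Δ`.
Total unimodularity gives each circuit of `A` a kernel vector with entries `±1` on it, i.e. a
signed circuit; every nonzero kernel vector is supported on a circuit, so peeling off such vectors
shows that `ker A` is spanned by signed circuit vectors. Equal signed circuits thus give
`ker A = ker A'`, hence `A x = A y ↔ A' x = A' y`. Finally an integral system `A x = b` with `A`
totally unimodular has an integral solution: one of minimal support uses independent columns, on
which some square submatrix is nonsingular, so of determinant `±1` and with integral inverse.
Hence `A x` is integral iff `A' x` is, and the two images have equal size.
-/

open Function Matrix

theorem Set.ncard_image_eq_ncard_image_of_eq_iff {α β γ : Type*} {f : α → β} {g : α → γ}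
    {s : Set α} (h : ∀ x ∈ s, ∀ y ∈ s, f x = f y ↔ g x = g y) :
    (f '' s).ncard = (g '' s).ncard := by
  refine Set.ncard_congr (fun b hb => g hb.choose) (fun b hb => ⟨_, hb.choose_spec.1, rfl⟩)
    (fun b₁ b₂ hb₁ hb₂ hg => ?_) ?_
  · rw [← hb₁.choose_spec.2, ← hb₂.choose_spec.2]
    exact (h _ hb₁.choose_spec.1 _ hb₂.choose_spec.1).2 hg
  · rintro _ ⟨x, hx, rfl⟩
    have hfx : f x ∈ f '' s := ⟨x, hx, rfl⟩
    exact ⟨f x, hfx, (h _ hfx.choose_spec.1 _ hx).1 hfx.choose_spec.2⟩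

lemma exists_ncard_support_sub_smul_lt {R n : Type*} [Field R] [Finite n] {y u : n → R}
    (hu : u ≠ 0) (huy : support u ⊆ support y) :
    ∃ c : R, (support (y - c • u)).ncard < (support y).ncard := by
  obtain ⟨j, hj⟩ := Function.ne_iff.1 hu
  refine ⟨y j / u j, Set.ncard_lt_ncard ⟨fun i hi => ?_, fun h => ?_⟩⟩
  · by_contra hyi
    have hui : u i = 0 := by_contra fun h => hyi (huy h)
    simp_all
  · have := h (huy hj)
    simp [div_mul_cancel₀ _ hj] at this

namespace Matrix

section Columns

variable {R k n : Type*} [CommRing R] [Fintype n]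

lemma mulVec_eq_sum_smul_col (A : Matrix k n R) (u : n → R) :
    A *ᵥ u = ∑ j, u j • A.col j := by
  simp only [mulVec_eq_sum, op_smul_eq_smul]
  rfl

lemma mulVec_eq_sum_of_support_subset (A : Matrix k n R) {S : Finset n} {u : n → R}
    (hu : support u ⊆ S) : A *ᵥ u = ∑ j ∈ S, u j • A.col j := by
  rw [mulVec_eq_sum_smul_col, ← sum_subset (subset_univ S) fun j _ hj => by
    rw [support_subset_iff'.1 hu j hj, zero_smul]]

lemma submatrix_subtype_mulVec (A : Matrix k n R) {S : Finset n} {u : n → R}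
    (hu : support u ⊆ S) : A.submatrix id ((↑) : S → n) *ᵥ (fun j => u j) = A *ᵥ u := by
  rw [mulVec_eq_sum_smul_col, mulVec_eq_sum_of_support_subset A hu, ← sum_coe_sort S]
  rfl

lemma not_linearIndepOn_col_iff (A : Matrix k n R) (S : Finset n) :
    ¬ LinearIndepOn R A.col (S : Set n) ↔
      ∃ u : n → R, u ≠ 0 ∧ support u ⊆ S ∧ A *ᵥ u = 0 := by
  classical
  rw [not_linearIndepOn_finset_iff]
  constructor
  · rintro ⟨f, hf, i, hi, hfi⟩
    have hsupp : support (fun j => if j ∈ S then f j else 0) ⊆ S :=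
      support_subset_iff'.2 fun j hj => if_neg hj
    refine ⟨_, fun h => hfi (by simpa [hi] using congrFun h i), hsupp, ?_⟩
    rw [mulVec_eq_sum_of_support_subset A hsupp, ← hf]
    exact sum_congr rfl fun j hj => by rw [if_pos hj]
  · rintro ⟨u, hu, hS, hAu⟩
    obtain ⟨i, hi⟩ := Function.ne_iff.1 hu
    exact ⟨u, (mulVec_eq_sum_of_support_subset A hS).symm.trans hAu, i, hS hi, hi⟩

end Columns

lemma exists_isUnit_submatrix_of_linearIndependent {R k n : Type*} [Field R] [Finite k]
    [Fintype n] [DecidableEq n] (A : Matrix k n R) (h : LinearIndependent R A.col) :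
    ∃ r : n → k, IsUnit (A.submatrix r id) := by
  have hspan : Submodule.span R (Set.range A.row) = ⊤ := by
    apply Submodule.eq_top_of_finrank_eq
    rw [← rank_eq_finrank_span_row, rank_eq_finrank_span_cols, finrank_span_eq_card h,
      Module.finrank_fintype_fun_eq_card]
  obtain ⟨κ, a, -, hκspan, hκ⟩ := exists_linearIndependent' R A.row
  let e := (Module.Basis.mk hκ (by rw [hκspan, hspan])).indexEquiv (Pi.basisFun R n)
  exact ⟨a ∘ e.symm, linearIndependent_rows_iff_isUnit.1 (hκ.comp e.symm e.symm.injective)⟩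

section Integrality

lemma map_intCast_mulVec {R k n : Type*} [Ring R] [Fintype n] (A₀ : Matrix k n ℤ)
    (z : n → ℤ) :
    A₀.map (Int.cast : ℤ → R) *ᵥ (Int.cast ∘ z) = Int.cast ∘ (A₀ *ᵥ z) := by
  ext i
  simpa using ((Int.castRingHom R).map_mulVec A₀ z i).symm

variable {R : Type*} [Field R] {k n : Type*}

lemma IsTotallyUnimodular.exists_map_intCast_eq {A : Matrix k n R}
    (hA : A.IsTotallyUnimodular) : ∃ A₀ : Matrix k n ℤ, A₀.map Int.cast = A := by
  choose s hs using hA.apply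
  exact ⟨of fun i j => (s i j : ℤ), by ext i j; simp [hs]⟩

lemma IsTotallyUnimodular.exists_intCast_eq_mulVec [Fintype n] {A : Matrix k n R}
    (hA : A.IsTotallyUnimodular) (z : n → ℤ) :
    ∃ q : k → ℤ, Int.cast ∘ q = A *ᵥ (Int.cast ∘ z) := by
  obtain ⟨A₀, rfl⟩ := hA.exists_map_intCast_eq
  exact ⟨A₀ *ᵥ z, (map_intCast_mulVec A₀ z).symm⟩

variable [CharZero R]

lemma IsTotallyUnimodular.isUnit_det_of_map_intCast_eq [Fintype n] [DecidableEq n]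
    {M₀ : Matrix n n ℤ} (hM : (M₀.map Int.cast : Matrix n n R).IsTotallyUnimodular)
    (hMu : IsUnit (M₀.map Int.cast : Matrix n n R)) : IsUnit M₀.det := by
  obtain ⟨s, hs⟩ := (isTotallyUnimodular_iff_fintype _).1 hM n id id
  rw [submatrix_id_id, ← Int.cast_det] at hs
  rw [isUnit_iff_isUnit_det, ← Int.cast_det] at hMu
  have : M₀.det = s := by exact_mod_cast hs.symm
  rcases s with _ | _ | _ <;> simp_all

lemma IsTotallyUnimodular.exists_eq_intCast_of_isUnit [Fintype n] [DecidableEq n]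
    {M : Matrix n n R} (hM : M.IsTotallyUnimodular) (hMu : IsUnit M) {x : n → R} {p : n → ℤ}
    (hx : M *ᵥ x = Int.cast ∘ p) : ∃ z : n → ℤ, x = Int.cast ∘ z := by
  obtain ⟨M₀, rfl⟩ := hM.exists_map_intCast_eq
  refine ⟨M₀⁻¹ *ᵥ p, mulVec_injective_iff_isUnit.2 hMu (hx.trans ?_)⟩
  rw [map_intCast_mulVec, mulVec_mulVec, mul_nonsing_inv _ (hM.isUnit_det_of_map_intCast_eq hMu),
    one_mulVec]

variable [Finite k] [Fintype n] [DecidableEq n] {A : Matrix k n R} {x : n → R} {p : k → ℤ}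

lemma IsTotallyUnimodular.exists_eq_intCast_of_linearIndependent (hA : A.IsTotallyUnimodular)
    (h : LinearIndependent R A.col) (hx : A *ᵥ x = Int.cast ∘ p) :
    ∃ z : n → ℤ, x = Int.cast ∘ z := by
  obtain ⟨r, hr⟩ := exists_isUnit_submatrix_of_linearIndependent A h
  exact (hA.submatrix r id).exists_eq_intCast_of_isUnit hr (p := p ∘ r)
    (funext fun i => congrFun hx (r i))

lemma IsTotallyUnimodular.exists_eq_intCast_of_linearIndepOn (hA : A.IsTotallyUnimodular)
    {S : Finset n} (hS : LinearIndepOn R A.col (S : Set n)) (hxS : support x ⊆ S)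
    (hx : A *ᵥ x = Int.cast ∘ p) : ∃ z : n → ℤ, x = Int.cast ∘ z := by
  obtain ⟨z, hz⟩ := (hA.submatrix id ((↑) : S → n)).exists_eq_intCast_of_linearIndependent
    (A := A.submatrix id ((↑) : S → n)) hS (x := fun j => x j)
    (by rw [submatrix_subtype_mulVec A hxS, hx])
  refine ⟨fun j => if h : j ∈ S then z ⟨j, h⟩ else 0, funext fun j => ?_⟩
  by_cases h : j ∈ S
  · simpa [h] using congrFun hz ⟨j, h⟩
  · simp [h, support_subset_iff'.1 hxS j h]

lemma IsTotallyUnimodular.exists_intCast_mulVec_eq (hA : A.IsTotallyUnimodular)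
    (hx : A *ᵥ x = Int.cast ∘ p) :
    ∃ z : n → ℤ, A *ᵥ (Int.cast ∘ z) = Int.cast ∘ p := by
  classical
  obtain ⟨y, hmin⟩ := exists_minimalFor_of_wellFoundedLT
    (fun y => A *ᵥ y = Int.cast ∘ p) (fun y => (support y).ncard) ⟨x, hx⟩
  have hy : A *ᵥ y = Int.cast ∘ p := hmin.prop
  have hind : LinearIndepOn R A.col ((support y).toFinset : Set n) := by
    by_contra hdep
    obtain ⟨u, hu, huy, hAu⟩ := (not_linearIndepOn_col_iff A _).1 hdep
    obtain ⟨c, hc⟩ := exists_ncard_support_sub_smul_lt hu (by simpa using huy)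
    refine hmin.not_lt (j := y - c • u) ?_ hc
    rw [mulVec_sub, mulVec_smul, hAu, smul_zero, sub_zero, hy]
  obtain ⟨z, rfl⟩ := hA.exists_eq_intCast_of_linearIndepOn hind (by simp) hy
  exact ⟨z, hy⟩

lemma IsTotallyUnimodular.mulVec_mem_range_intCast_of_ker_le {k' : Type*}
    {A' : Matrix k' n R} (hA : A.IsTotallyUnimodular) (hA' : A'.IsTotallyUnimodular)
    (h : LinearMap.ker A.mulVecLin ≤ LinearMap.ker A'.mulVecLin)
    (hx : A *ᵥ x ∈ Set.range (Int.cast ∘ ·)) :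
    A' *ᵥ x ∈ Set.range (Int.cast ∘ ·) := by
  obtain ⟨p, hp⟩ := hx
  obtain ⟨z, hz⟩ := hA.exists_intCast_mulVec_eq hp.symm
  obtain ⟨q, hq⟩ := hA'.exists_intCast_eq_mulVec z
  exact ⟨q, hq.trans <| LinearMap.sub_mem_ker_iff.1 <| h <| LinearMap.sub_mem_ker_iff.2 <|
    hz.trans hp⟩

end Integrality

section Circuits

variable {k n : Type*} {A : Matrix k n ℝ} {C : Finset n}

lemma IsCircuit.nonempty (hC : A.IsCircuit C) : C.Nonempty := by
  rw [nonempty_iff_ne_empty]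
  rintro rfl
  exact hC.1 linearIndependent_empty_type

lemma IsCircuit.linearIndepOn_erase [DecidableEq n] (hC : A.IsCircuit C) {e : n} (he : e ∈ C) :
    LinearIndepOn ℝ A.col ((C.erase e : Finset n) : Set n) :=
  not_not.1 (hC.2 _ (erase_ssubset he))

variable [Fintype n]

lemma colDep_iff_exists_mulVec_eq_zero (A : Matrix k n ℝ) (S : Finset n) :
    A.ColDep S ↔ ∃ u : n → ℝ, u ≠ 0 ∧ support u ⊆ S ∧ A *ᵥ u = 0 :=
  not_linearIndepOn_col_iff A S

lemma exists_isCircuit_subset_support {x : n → ℝ} (hx : A *ᵥ x = 0) (hx0 : x ≠ 0) :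
    ∃ C : Finset n, (C : Set n) ⊆ support x ∧ A.IsCircuit C := by
  classical
  have hdep : A.ColDep (support x).toFinset :=
    (colDep_iff_exists_mulVec_eq_zero A _).2 ⟨x, hx0, by simp, hx⟩
  obtain ⟨C, hCx, hC⟩ := exists_minimal_le_of_wellFoundedLT A.ColDep _ hdep
  exact ⟨C, by simpa using coe_subset.2 hCx, hC.prop, fun S hS => hC.not_prop_of_lt hS⟩

lemma IsCircuit.eq_zero_of_apply_eq_zero (hC : A.IsCircuit C) {u : n → ℝ} (hAu : A *ᵥ u = 0)
    (huC : support u ⊆ C) {e : n} (he : e ∈ C) (hue : u e = 0) : u = 0 := by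
  classical
  by_contra hu
  refine (not_linearIndepOn_col_iff A _).2 ⟨u, hu, ?_, hAu⟩ (hC.linearIndepOn_erase he)
  intro j hj
  simp only [coe_erase, Set.mem_sdiff, Set.mem_singleton_iff]
  exact ⟨huC hj, by rintro rfl; exact hj hue⟩

lemma IsCircuit.exists_mulVec_eq_zero_apply_eq_one (hC : A.IsCircuit C) {e : n} (he : e ∈ C) :
    ∃ u : n → ℝ, A *ᵥ u = 0 ∧ support u ⊆ C ∧ u e = 1 := by
  obtain ⟨u, hu0, huC, hAu⟩ := (colDep_iff_exists_mulVec_eq_zero A C).1 hC.1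
  have hue : u e ≠ 0 := fun h => hu0 (hC.eq_zero_of_apply_eq_zero hAu huC he h)
  refine ⟨(u e)⁻¹ • u, by rw [mulVec_smul, hAu, smul_zero], ?_, by simp [hue]⟩
  exact (support_const_smul_subset _ _).trans huC

lemma mulVec_eq_sum_sub_sum (A : Matrix k n ℝ) {w : n → ℝ} (hwC : support w ⊆ C)
    (hw : ∀ j ∈ C, w j = 1 ∨ w j = -1) :
    A *ᵥ w = ∑ i ∈ C with w i = 1, A.col i - ∑ i ∈ C with w i = -1, A.col i := by
  rw [mulVec_eq_sum_of_support_subset A hwC]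
  simp only [sum_filter, ← sum_sub_distrib]
  refine sum_congr rfl fun j hj => ?_
  rcases hw j hj with h | h <;> norm_num [h]

lemma IsCircuit.exists_intCast_mulVec_eq_zero [Finite k] [DecidableEq n]
    (hA : A.IsTotallyUnimodular) (hC : A.IsCircuit C) {e : n} (he : e ∈ C) :
    ∃ z : n → ℤ, A *ᵥ (Int.cast ∘ z) = 0 ∧ support z ⊆ C ∧ z e = 1 := by
  obtain ⟨u, hAu, huC, hue⟩ := hC.exists_mulVec_eq_zero_apply_eq_one he
  obtain ⟨q, hq⟩ := hA.exists_intCast_eq_mulVec (Pi.single e 1)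
  have hsingle : (Int.cast ∘ Pi.single e (1 : ℤ) : n → ℝ) = Pi.single e 1 := by
    ext j; by_cases h : j = e <;> simp [h]
  have hsupp : support (u - Pi.single e 1) ⊆ (C.erase e : Finset n) := by
    intro j hj
    by_cases h : j = e
    · subst h; simp [hue] at hj
    · have : u j ≠ 0 := by simpa [h] using hj
      simpa [h] using huC this
  have hAv : A *ᵥ (u - Pi.single e 1) = Int.cast ∘ (-q) := by
    rw [mulVec_sub, hAu, ← hsingle, ← hq, zero_sub]
    ext; simp
  obtain ⟨z, hz⟩ := hA.exists_eq_intCast_of_linearIndepOn (hC.linearIndepOn_erase he) hsupp hAv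
  have hu : u = Int.cast ∘ (z + Pi.single e 1) := by
    rw [← sub_add_cancel u (Pi.single e 1), hz, ← hsingle]
    ext; simp
  refine ⟨z + Pi.single e 1, hu ▸ hAu, fun j hj => huC ?_, by simpa [hue] using congrFun hu e⟩
  rw [hu, mem_support, Function.comp_apply, Int.cast_ne_zero]
  exact hj

lemma IsCircuit.exists_sign_vector [Finite k] [DecidableEq n] (hA : A.IsTotallyUnimodular)
    (hC : A.IsCircuit C) :
    ∃ w : n → ℝ, A *ᵥ w = 0 ∧ support w ⊆ C ∧ ∀ j ∈ C, w j = 1 ∨ w j = -1 := by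
  obtain ⟨e, he⟩ := hC.nonempty
  choose! z hAz hzC hz using fun j (hj : j ∈ C) => hC.exists_intCast_mulVec_eq_zero hA hj
  refine ⟨Int.cast ∘ z e, hAz e he, fun j hj => hzC e he (by simpa using hj), fun j hj => ?_⟩
  -- `z e` and `z e j • z j` are kernel vectors on `C` that agree at `j`, so they are equal;
  -- at `e` this reads `z e j * z j e = 1`.
  have hdiff : (Int.cast ∘ z e : n → ℝ) - (z e j : ℝ) • (Int.cast ∘ z j) = 0 := by
    refine hC.eq_zero_of_apply_eq_zero ?_ ?_ hj (by simp [hz j hj])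
    · rw [mulVec_sub, mulVec_smul, hAz e he, hAz j hj, smul_zero, sub_zero]
    · refine (support_sub _ _).trans (Set.union_subset ?_ ?_)
      · exact fun i hi => hzC e he (by simpa using hi)
      · exact (support_const_smul_subset _ _).trans fun i hi => hzC j hj (by simpa using hi)
  have hunit : z e j * z j e = 1 := by
    have := congrFun hdiff e
    simp only [Pi.sub_apply, Function.comp_apply, hz e he, Pi.smul_apply, smul_eq_mul,
      Pi.zero_apply, Int.cast_one] at this
    exact_mod_cast (sub_eq_zero.1 this).symm
  rcases Int.eq_one_or_neg_one_of_mul_eq_one hunit with h | h <;> simp [h]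

lemma IsCircuit.isSignedCircuit_of_sign_vector [Fintype k] [DecidableEq n] (hC : A.IsCircuit C)
    {w : n → ℝ} (hAw : A *ᵥ w = 0) (hwC : support w ⊆ C)
    (hw : ∀ j ∈ C, w j = 1 ∨ w j = -1) :
    A.IsSignedCircuit {j ∈ C | w j = 1} {j ∈ C | w j = -1} := by
  refine ⟨disjoint_filter.2 fun j _ h₁ h₂ => by norm_num [h₁] at h₂, ?_, ?_⟩
  · rwa [← filter_or, filter_true_of_mem hw]
  · exact (mulVec_eq_sum_sub_sum A hwC hw).symm.trans hAw

end Circuits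

section LatticePoints

variable {R : Type*} [Field R] [LinearOrder R] [IsStrictOrderedRing R] {k n : Type*} [Fintype n]

lemma convexHull_range_transpose (A : Matrix k n R) :
    convexHull R (Set.range Aᵀ) = A.mulVec '' stdSimplex R n := by
  classical
  rw [← convexHull_basis_eq_stdSimplex, ← coe_mulVecLin, LinearMap.image_convexHull,
    ← Set.range_comp]
  congr 2
  ext j i
  simp [mulVec, dotProduct]

lemma ncard_intCast_preimage_smul_convexHull (A : Matrix k n R) (t : R) :
    {p : k → ℤ | (fun j => (p j : R)) ∈ t • convexHull R (Set.range Aᵀ)}.ncard =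
      (A.mulVec ''
        (t • stdSimplex R n ∩ A.mulVec ⁻¹' Set.range (Int.cast ∘ ·))).ncard := by
  have hinj : Injective (Int.cast ∘ · : (k → ℤ) → k → R) :=
    fun p q h => funext fun i => Int.cast_injective (congrFun h i)
  rw [← Set.ncard_image_of_injective _ hinj]
  change ((Int.cast ∘ ·) '' ((Int.cast ∘ ·) ⁻¹' _)).ncard = _
  rw [Set.image_preimage_eq_inter_range, convexHull_range_transpose, ← coe_mulVecLin,
    ← image_smul_set, Set.image_inter_preimage]

end LatticePoints

theorem ker_mulVecLin_le_of_isSignedCircuit_imp {k k' n : Type*} [Fintype k] [Fintype k']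
    [Fintype n] [DecidableEq n] {A : Matrix k n ℝ} {A' : Matrix k' n ℝ}
    (hA : A.IsTotallyUnimodular)
    (h : ∀ Cp Cm : Finset n, A.IsSignedCircuit Cp Cm → A'.IsSignedCircuit Cp Cm) :
    LinearMap.ker A.mulVecLin ≤ LinearMap.ker A'.mulVecLin := by
  intro x hx
  simp only [LinearMap.mem_ker, mulVecLin_apply] at hx ⊢
  induction hN : (support x).ncard using Nat.strong_induction_on generalizing x with
  | _ N ih =>
  rcases eq_or_ne x 0 with rfl | hx0
  · exact mulVec_zero _
  obtain ⟨C, hCx, hC⟩ := exists_isCircuit_subset_support hx hx0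
  obtain ⟨w, hAw, hwC, hw⟩ := hC.exists_sign_vector hA
  have hA'w : A' *ᵥ w = 0 := by
    rw [mulVec_eq_sum_sub_sum A' hwC hw]
    exact (h _ _ (hC.isSignedCircuit_of_sign_vector hAw hwC hw)).2.2
  have hw0 : w ≠ 0 := by
    obtain ⟨e, he⟩ := hC.nonempty
    intro hw0
    rcases hw e he with h | h <;> norm_num [hw0] at h
  obtain ⟨c, hc⟩ := exists_ncard_support_sub_smul_lt hw0 (hwC.trans hCx)
  have hAx' : A *ᵥ (x - c • w) = 0 := by
    rw [mulVec_sub, mulVec_smul, hx, hAw, smul_zero, sub_zero]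
  have := ih _ (hN ▸ hc) hAx' rfl
  rwa [mulVec_sub, mulVec_smul, hA'w, smul_zero, sub_zero] at this

end Matrix

/-- If totally unimodular matrices `A` and `A'` have the same signed circuits,
then for every positive integer `t` the dilates `t·Q_A` and `t·Q_{A'}` of the two root
polytopes contain the same number of lattice points; hence the Ehrhart polynomials agree. -/
theorem root_polytope_same_lattice_point_counts
    {k k' n : Type*} [Fintype k] [Fintype k'] [Fintype n] [DecidableEq n]
    (A : Matrix k n ℝ) (A' : Matrix k' n ℝ)
    (hA : A.IsTotallyUnimodular) (hA' : A'.IsTotallyUnimodular)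
    (hsame : ∀ Cp Cm : Finset n, A.IsSignedCircuit Cp Cm ↔ A'.IsSignedCircuit Cp Cm) :
    ∀ t : ℕ, 0 < t →
      {p : k → ℤ | (fun j => (p j : ℝ)) ∈
          (t : ℝ) • convexHull ℝ (Set.range A.transpose)}.ncard =
      {p : k' → ℤ | (fun j => (p j : ℝ)) ∈
          (t : ℝ) • convexHull ℝ (Set.range A'.transpose)}.ncard := by
  intro t _
  have hker : LinearMap.ker A.mulVecLin = LinearMap.ker A'.mulVecLin :=
    le_antisymm (ker_mulVecLin_le_of_isSignedCircuit_imp hA fun Cp Cm => (hsame Cp Cm).1)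
      (ker_mulVecLin_le_of_isSignedCircuit_imp hA' fun Cp Cm => (hsame Cp Cm).2)
  have hint :
      A.mulVec ⁻¹' Set.range (Int.cast ∘ ·) = A'.mulVec ⁻¹' Set.range (Int.cast ∘ ·) :=
    Set.ext fun x => ⟨hA.mulVec_mem_range_intCast_of_ker_le hA' hker.le,
      hA'.mulVec_mem_range_intCast_of_ker_le hA hker.ge⟩
  rw [ncard_intCast_preimage_smul_convexHull, ncard_intCast_preimage_smul_convexHull, hint]
  refine Set.ncard_image_eq_ncard_image_of_eq_iff fun x _ y _ => ?_
  simp only [← mulVecLin_apply, ← LinearMap.sub_mem_ker_iff, hker]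
end

section
/- Let A be a totally unimodular matrix representing a co-Eulerian regular oriented matroid (every signed circuit C satisfies |C^+| = |C^-|). Then a set of columns of A is affinely independent if and only if it is linearly independent. -/
open Finset

/-!
By Cramer's rule, the coefficients expressing one column of a totally unimodular matrix in
terms of linearly independent others are quotients of two square subdeterminants, hence lie
in `{0, ±1}`. So every circuit `C` carries a dependence `∑_{i ∈ C} h_i a_i = 0` with all
`h_i = ±1`; the sets where `h = 1` and `h = -1` form a signed circuit, and co-Eulerianity says
they have the same size, i.e. `∑_{i ∈ C} h_i = 0`. The dependence is then affine. Since a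
linearly dependent set of columns contains a circuit, affinely independent columns are linearly
independent; the converse holds for any vectors.
-/

theorem Finset.sum_smul_eq_sum_filter_sub_sum_filter {ι R M : Type*} [Ring R] [DecidableEq R]
    [AddCommGroup M] [Module R M] {s : Finset ι} {h : ι → R}
    (hh : ∀ i ∈ s, h i = 1 ∨ h i = -1) (f : ι → M) :
    ∑ i ∈ s, h i • f i = ∑ i ∈ s with h i = 1, f i - ∑ i ∈ s with ¬h i = 1, f i := by
  rw [← sum_filter_add_sum_filter_not s (h · = 1), sub_eq_add_neg, ← sum_neg_distrib]
  congr 1 <;> refine sum_congr rfl fun i hi => ?_ <;> rw [mem_filter] at hi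
  · rw [hi.2, one_smul]
  · rw [(hh i hi.1).resolve_left hi.2, neg_one_smul]

namespace Matrix

section TotallyUnimodular

variable {K m ι : Type*} [Field K]

theorem exists_isUnit_det_submatrix_of_linearIndependent_col [Fintype m] [Fintype ι]
    [DecidableEq ι] {B : Matrix m ι K} (hB : LinearIndependent K B.col) :
    ∃ r : ι → m, IsUnit (B.submatrix r id).det := by
  have hspan : Submodule.span K (Set.range B.row) = ⊤ := by
    apply Submodule.eq_top_of_finrank_eq
    rw [← rank_eq_finrank_span_row, ← rank_transpose, Module.finrank_fintype_fun_eq_card]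
    exact LinearIndependent.rank_matrix (M := Bᵀ) hB
  obtain ⟨κ, a, -, hspan_a, hli⟩ := exists_linearIndependent' K B.row
  let b : Module.Basis κ K (ι → K) := .mk hli (by rw [hspan_a, hspan])
  let e : ι ≃ κ := (Pi.basisFun K ι).indexEquiv b
  refine ⟨a ∘ e, (isUnit_iff_isUnit_det _).mp (linearIndependent_rows_iff_isUnit.mp ?_)⟩
  exact hli.comp e e.injective

theorem cramer_mulVec {n R : Type*} [Fintype n] [DecidableEq n] [CommRing R]
    (M : Matrix n n R) (x : n → R) : cramer M (M *ᵥ x) = M.det • x := by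
  rw [cramer_eq_adjugate_mulVec, mulVec_mulVec, adjugate_mul, smul_mulVec, one_mulVec]

theorem IsTotallyUnimodular.exists_signType_eq_of_sum_smul_col_eq [Fintype m] [Fintype ι]
    [DecidableEq ι] {n : Type*} {A : Matrix m n K} (hA : A.IsTotallyUnimodular) {c : ι → n}
    (hc : LinearIndependent K fun i => Aᵀ (c i)) {j : n} {x : ι → K}
    (hx : ∑ i, x i • Aᵀ (c i) = Aᵀ j) (i : ι) : ∃ s : SignType, x i = s := by
  obtain ⟨r, hr⟩ :=
    exists_isUnit_det_submatrix_of_linearIndependent_col (B := A.submatrix id c) hc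
  set M := A.submatrix r c
  have hMx : M *ᵥ x = fun ρ => A (r ρ) j := by
    funext ρ
    simpa [M, mulVec, dotProduct, Finset.sum_apply, mul_comm] using congrFun hx (r ρ)
  have hupdate : M.updateCol i (fun ρ => A (r ρ) j) = A.submatrix r (Function.update c i j) := by
    ext ρ i'
    rcases eq_or_ne i' i with rfl | h <;> simp [M, *]
  obtain ⟨s, hs⟩ := (A.isTotallyUnimodular_iff_fintype.mp hA) ι r c
  obtain ⟨t, ht⟩ := (A.isTotallyUnimodular_iff_fintype.mp hA) ι r (Function.update c i j)
  have hcramer : (s : K) * x i = t := by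
    rw [hs, ht, ← hupdate, ← cramer_apply, ← hMx, cramer_mulVec, Pi.smul_apply, smul_eq_mul]
  have hs0 : (s : K) ≠ 0 := hs ▸ hr.ne_zero
  have hss : (s : K) * s = 1 := by rcases s with _ | _ | _ <;> simp at hs0 ⊢
  refine ⟨t * s, ?_⟩
  rw [SignType.coe_mul, ← hcramer]
  linear_combination (-x i) * hss

end TotallyUnimodular

variable {k n : Type*} {A : Matrix k n ℝ}

theorem ColDep.nonempty {S : Finset n} (hS : A.ColDep S) : S.Nonempty := by
  rw [nonempty_iff_ne_empty]
  rintro rfl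
  exact hS linearIndependent_empty_type

theorem ColDep.exists_isCircuit_subset {S : Finset n} (hS : A.ColDep S) :
    ∃ C ⊆ S, A.IsCircuit C := by
  obtain ⟨C, hCS, hdep, hmin⟩ := exists_minimal_le_of_wellFoundedLT A.ColDep S hS
  exact ⟨C, hCS, hdep, fun T hTC hT => hTC.2 (hmin hT hTC.le)⟩

variable [DecidableEq n]

theorem IsCircuit.ne_zero_of_sum_smul_eq_zero {C : Finset n} (hC : A.IsCircuit C) {g : n → ℝ}
    (hg : ∑ i ∈ C, g i • Aᵀ i = 0) {j : n} (hj : j ∈ C) (hgj : g j ≠ 0) {i : n} (hi : i ∈ C) :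
    g i ≠ 0 := by
  intro hgi
  refine hC.2 (C.erase i) (erase_ssubset hi)
    (not_linearIndepOn_finset_iff.mpr ⟨g, ?_, j, ?_, hgj⟩)
  · rwa [sum_erase _ (by rw [hgi, zero_smul])]
  · exact mem_erase.mpr ⟨fun hji => hgj (hji ▸ hgi), hj⟩

theorem IsCircuit.exists_sum_smul_eq_zero_of_isTotallyUnimodular [Fintype k]
    (hA : A.IsTotallyUnimodular) {C : Finset n} (hC : A.IsCircuit C) :
    ∃ h : n → ℝ, ∑ i ∈ C, h i • Aᵀ i = 0 ∧ ∀ i ∈ C, h i = 1 ∨ h i = -1 := by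
  obtain ⟨g, hg, j, hj, hgj⟩ := not_linearIndepOn_finset_iff.mp hC.1
  have hrest : ∑ i ∈ C.erase j, g i • Aᵀ i = -(g j • Aᵀ j) :=
    eq_neg_of_add_eq_zero_right ((add_sum_erase C _ hj).trans hg)
  have hx : ∑ i : C.erase j, (-g i / g j) • Aᵀ i = Aᵀ j := by
    rw [sum_coe_sort (C.erase j) fun i => (-g i / g j) • Aᵀ i]
    calc ∑ i ∈ C.erase j, (-g i / g j) • Aᵀ i
        = -(g j)⁻¹ • ∑ i ∈ C.erase j, g i • Aᵀ i := by
          rw [smul_sum]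
          refine sum_congr rfl fun i _ => ?_
          rw [smul_smul, neg_div, div_eq_inv_mul, neg_mul]
      _ = Aᵀ j := by
          rw [hrest, smul_neg, neg_smul, neg_neg, smul_smul, inv_mul_cancel₀ hgj, one_smul]
  refine ⟨fun i => g i / g j, ?_, fun i hi => ?_⟩
  · simp_rw [div_eq_inv_mul, mul_smul, ← smul_sum, hg, smul_zero]
  rcases eq_or_ne i j with rfl | hij
  · exact Or.inl (div_self hgj)
  have hD : LinearIndependent ℝ fun i : C.erase j => Aᵀ i :=
    of_not_not (hC.2 _ (erase_ssubset hj))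
  obtain ⟨s, hs⟩ :=
    hA.exists_signType_eq_of_sum_smul_col_eq hD hx ⟨i, mem_erase.mpr ⟨hij, hi⟩⟩
  have hgi := hC.ne_zero_of_sum_smul_eq_zero hg hj hgj hi
  rw [neg_div, neg_eq_iff_eq_neg] at hs
  rcases s with _ | _ | _
  · exact absurd hs (by simp [hgi, hgj])
  · exact Or.inl (by simpa using hs)
  · exact Or.inr (by simpa using hs)

theorem IsCircuit.isSignedCircuit_filter [Fintype k] {C : Finset n} (hC : A.IsCircuit C)
    {h : n → ℝ} (hsum : ∑ i ∈ C, h i • Aᵀ i = 0) (hh : ∀ i ∈ C, h i = 1 ∨ h i = -1) :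
    A.IsSignedCircuit (C.filter (h · = 1)) (C.filter (¬h · = 1)) :=
  ⟨disjoint_filter_filter_not C C _, by rwa [filter_union_filter_not_eq],
    (sum_smul_eq_sum_filter_sub_sum_filter hh fun i => Aᵀ i).symm.trans hsum⟩

end Matrix

theorem affineIndependent_iff_linearIndependent_of_coEulerian_general
    {k n : Type*} [Fintype k] [DecidableEq n]
    (A : Matrix k n ℝ) (hA : A.IsTotallyUnimodular)
    (hco : ∀ Cp Cm : Finset n, A.IsSignedCircuit Cp Cm → Cp.card = Cm.card)
    (S : Finset n) :
    AffineIndependent ℝ (fun i : S => A.transpose i.1) ↔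
      LinearIndependent ℝ (fun i : S => A.transpose i.1) := by
  refine ⟨fun hS => ?_, LinearIndependent.affineIndependent ℝ⟩
  by_contra hdep
  obtain ⟨C, hCS, hC⟩ := Matrix.ColDep.exists_isCircuit_subset (A := A) hdep
  obtain ⟨h, hsum, hh⟩ := hC.exists_sum_smul_eq_zero_of_isTotallyUnimodular hA
  have hweights : ∑ i ∈ C, h i = 0 := by
    have hsplit := sum_smul_eq_sum_filter_sub_sum_filter hh fun _ => (1 : ℝ)
    simp only [smul_eq_mul, mul_one, sum_const, nsmul_eq_mul] at hsplit
    rw [hsplit, hco _ _ (hC.isSignedCircuit_filter hsum hh), sub_self]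
  have hCaff : AffineIndependent ℝ fun i : C => A.transpose i :=
    hS.comp_embedding (Set.embeddingOfSubset _ _ hCS)
  obtain ⟨j, hj⟩ := hC.1.nonempty
  have hhj := hCaff.eq_zero_of_sum_eq_zero (s := univ) (w := fun i : C => h i)
    (by rwa [sum_coe_sort C h]) (by rwa [sum_coe_sort C fun i => h i • A.transpose i])
    ⟨j, hj⟩ (mem_univ _)
  rcases hh j hj with h1 | h1 <;> simp [h1] at hhj

/-- For a totally unimodular matrix representing a co-Eulerian regular
oriented matroid (every signed circuit has `|C⁺| = |C⁻|`), a set of columns is affinely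
independent if and only if it is linearly independent. -/
theorem affineIndependent_iff_linearIndependent_of_coEulerian
    {k n : Type*} [Fintype k] [Fintype n] [DecidableEq n]
    (A : Matrix k n ℝ) (hA : A.IsTotallyUnimodular)
    (hco : ∀ Cp Cm : Finset n, A.IsSignedCircuit Cp Cm → Cp.card = Cm.card)
    (S : Finset n) :
    AffineIndependent ℝ (fun i : S => A.transpose i.1) ↔
      LinearIndependent ℝ (fun i : S => A.transpose i.1) :=
  affineIndependent_iff_linearIndependent_of_coEulerian_general A hA hco S
end
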